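/- For 0 < q < 1 and β ∈ ℝ, set φ₁ = arg(cos β + i(1−2q) sin β) (the two-argument arctangent arctan2((1−2q) sin β, cos β)) and φ₂ = arcsin(2√(q(1−q)) sin β). Then the matrix exponential of the single-qubit warm-start mixer factorizes exactly as exp(−i β M(q)) = [[e^{−iφ₁} cos φ₂, i sin φ₂], [i sin φ₂, e^{iφ₁} cos φ₂]]; equivalently, the two-qubit block evolution exp(−i β · blockdiag(0, M(q), 0)) equals the product of a Z-rotation by φ₁ on the first qubit, an XY-interaction realizing blockdiag(1, [[cos φ₂, i sin φ₂],[i sin φ₂, cos φ₂]], 1), and a Z-rotation by −φ₁ on the second qubit. -/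

import Mathlib

/-!
`M(q)` is a reflection: `M(q)² = 1`, so the exponential series collapses to
`exp(-iβM) = cos β - i sin β · M`. Its off-diagonal entries are `i sin φ₂`, and its diagonal
entries `cos β ∓ i(1-2q) sin β` have modulus `√(1 - sin² φ₂) = cos φ₂`, hence polar form
`e^{∓iφ₁} cos φ₂`. On two qubits `N = blockdiag(0, M, 0)` satisfies `N³ = N`, for which the series
again collapses, to `exp(-iβN) = blockdiag(1, exp(-iβM), 1)`; finally, both Z-rotations act on the
middle block as `R_Z(φ₁)`, and `R_Z(φ₁) X R_Z(φ₁)` puts the phases `e^{∓iφ₁}` on the diagonal of `X`.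
-/

open Matrix Complex Kronecker

/-- The single-qubit warm-start mixer `M(q)`, as a complex 2×2 matrix. -/
noncomputable def wsMixer (q : ℝ) : Matrix (Fin 2) (Fin 2) ℂ :=
  !![(1 - 2*q : ℝ), (-2 * Real.sqrt (q * (1 - q)) : ℝ);
     (-2 * Real.sqrt (q * (1 - q)) : ℝ), (2*q - 1 : ℝ)]

/-- Two-qubit basis states are indexed by `Fin 2 × Fin 2`, ordered
`|00⟩, |01⟩, |10⟩, |11⟩`.  `blockdiag a B d` acts as the scalar `a` on `|00⟩`,
as the 2×2 matrix `B` on `span{|01⟩, |10⟩}`, and as the scalar `d` on `|11⟩`. -/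
def blockdiag (a : ℂ) (B : Matrix (Fin 2) (Fin 2) ℂ) (d : ℂ) :
    Matrix (Fin 2 × Fin 2) (Fin 2 × Fin 2) ℂ := fun p r =>
  if p = (0, 0) ∧ r = (0, 0) then a
  else if p = (1, 1) ∧ r = (1, 1) then d
  else if (p = (0, 1) ∨ p = (1, 0)) ∧ (r = (0, 1) ∨ r = (1, 0)) then B p.1 r.1
  else 0

/-- The single-qubit Z-rotation `R_Z(θ) = diag(e^{-iθ/2}, e^{iθ/2})`. -/
noncomputable def RZ (θ : ℝ) : Matrix (Fin 2) (Fin 2) ℂ :=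
  !![Complex.exp (-(Complex.I * θ) / 2), 0; 0, Complex.exp (Complex.I * θ / 2)]

open scoped ComplexConjugate

theorem pow_two_mul_add_one_of_pow_three_eq_self {M : Type*} [Monoid M] {x : M} (hx : x ^ 3 = x)
    (k : ℕ) : x ^ (2 * k + 1) = x := by
  induction k with
  | zero => simp
  | succ k ih => rw [show 2 * (k + 1) + 1 = 2 * k + 1 + 2 by ring, pow_add, ih, ← pow_succ', hx]

theorem NormedSpace.exp_smul_of_pow_three_eq_self {𝔸 : Type*} [NormedRing 𝔸] [NormedAlgebra ℂ 𝔸]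
    [CompleteSpace 𝔸] {x : 𝔸} (hx : x ^ 3 = x) (t : ℂ) :
    exp (t • x) = 1 + (cosh t - 1) • x ^ 2 + sinh t • x := by
  have hodd (k : ℕ) : x ^ (2 * k + 1) = x := pow_two_mul_add_one_of_pow_three_eq_self hx k
  have heven (k : ℕ) : x ^ (2 * k) = x ^ 2 + if k = 0 then 1 - x ^ 2 else 0 := by
    rcases k with _ | k
    · simp
    · rw [if_neg k.succ_ne_zero, add_zero, show 2 * (k + 1) = 2 * k + 1 + 1 by ring, pow_succ,
        hodd, sq]
  have hseries : HasSum (fun n ↦ (n.factorial : ℂ)⁻¹ • (t • x) ^ n)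
      (cosh t • x ^ 2 + (1 - x ^ 2) + sinh t • x) := by
    refine HasSum.even_add_odd ?_ ?_
    · convert ((hasSum_cosh t).smul_const (x ^ 2)).add (hasSum_ite_eq 0 (1 - x ^ 2)) using 1
      ext k
      rw [smul_pow, smul_smul, heven, smul_add]
      rcases k with _ | k <;> simp [div_eq_inv_mul]
    · convert (hasSum_sinh t).smul_const x using 1
      ext k
      rw [smul_pow, smul_smul, hodd, div_eq_inv_mul]
  rw [(exp_series_hasSum_exp' (t • x)).unique hseries, sub_smul, one_smul]
  abel

section MatrixExp

variable {n : Type*} [Fintype n] [DecidableEq n] {A : Matrix n n ℂ}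

theorem Matrix.exp_smul_of_pow_three_eq_self (hA : A ^ 3 = A) (t : ℂ) :
    NormedSpace.exp (t • A) = 1 + (cosh t - 1) • A ^ 2 + sinh t • A :=
  open scoped Norms.Operator in NormedSpace.exp_smul_of_pow_three_eq_self hA t

theorem Matrix.exp_smul_of_sq_eq_one (hA : A ^ 2 = 1) (t : ℂ) :
    NormedSpace.exp (t • A) = cosh t • 1 + sinh t • A := by
  rw [Matrix.exp_smul_of_pow_three_eq_self (by rw [pow_succ, hA, one_mul]), hA, sub_smul,
    one_smul]
  abel

end MatrixExp

section Blockdiag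

variable (a a' d d' c : ℂ) (B B' : Matrix (Fin 2) (Fin 2) ℂ)

theorem blockdiag_one : blockdiag 1 1 1 = 1 := by
  ext ⟨i, j⟩ ⟨k, l⟩
  fin_cases i <;> fin_cases j <;> fin_cases k <;> fin_cases l <;> simp [blockdiag]

theorem blockdiag_add :
    blockdiag a B d + blockdiag a' B' d' = blockdiag (a + a') (B + B') (d + d') := by
  ext p r
  simp only [blockdiag, Matrix.add_apply]
  split_ifs <;> simp

theorem smul_blockdiag : c • blockdiag a B d = blockdiag (c * a) (c • B) (c * d) := by
  ext p r
  simp only [blockdiag, Matrix.smul_apply, smul_eq_mul]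
  split_ifs <;> simp

theorem blockdiag_mul :
    blockdiag a B d * blockdiag a' B' d' = blockdiag (a * a') (B * B') (d * d') := by
  ext ⟨i, j⟩ ⟨k, l⟩
  fin_cases i <;> fin_cases j <;> fin_cases k <;> fin_cases l <;>
    simp [blockdiag, mul_apply, Fintype.sum_prod_type, Fin.sum_univ_two]

theorem blockdiag_pow (n : ℕ) : blockdiag a B d ^ n = blockdiag (a ^ n) (B ^ n) (d ^ n) := by
  induction n with
  | zero => simp [blockdiag_one]
  | succ n ih => rw [pow_succ, ih, blockdiag_mul, pow_succ, pow_succ, pow_succ]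

end Blockdiag

theorem exp_smul_blockdiag_zero {B : Matrix (Fin 2) (Fin 2) ℂ} (hB : B ^ 3 = B) (t : ℂ) :
    NormedSpace.exp (t • blockdiag 0 B 0) = blockdiag 1 (NormedSpace.exp (t • B)) 1 := by
  have hN : blockdiag 0 B 0 ^ 3 = blockdiag 0 B 0 := by rw [blockdiag_pow, hB]; simp
  rw [Matrix.exp_smul_of_pow_three_eq_self hN, Matrix.exp_smul_of_pow_three_eq_self hB,
    blockdiag_pow, ← blockdiag_one, smul_blockdiag, smul_blockdiag, blockdiag_add, blockdiag_add]
  simp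

theorem RZ_kronecker_one (θ : ℝ) :
    RZ θ ⊗ₖ (1 : Matrix (Fin 2) (Fin 2) ℂ)
      = blockdiag (exp (-(I * θ) / 2)) (RZ θ) (exp (I * θ / 2)) := by
  ext ⟨i, j⟩ ⟨k, l⟩
  fin_cases i <;> fin_cases j <;> fin_cases k <;> fin_cases l <;> simp [blockdiag, RZ, one_apply]

theorem one_kronecker_RZ_neg (θ : ℝ) :
    (1 : Matrix (Fin 2) (Fin 2) ℂ) ⊗ₖ RZ (-θ)
      = blockdiag (exp (I * θ / 2)) (RZ θ) (exp (-(I * θ) / 2)) := by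
  ext ⟨i, j⟩ ⟨k, l⟩
  fin_cases i <;> fin_cases j <;> fin_cases k <;> fin_cases l <;>
    simp [blockdiag, RZ, one_apply, neg_div]

theorem RZ_mul_mul_RZ (θ : ℝ) (a b c d : ℂ) :
    RZ θ * !![a, b; c, d] * RZ θ = !![exp (-(I * θ)) * a, b; c, exp (I * θ) * d] := by
  have hsq : exp (I * θ) = exp (I * θ / 2) ^ 2 := by rw [← exp_nat_mul]; ring_nf
  have hne : exp (I * θ / 2) ≠ 0 := exp_ne_zero _
  rw [RZ, neg_div, exp_neg, exp_neg, hsq, mul_fin_two, mul_fin_two]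
  ext i j
  fin_cases i <;> fin_cases j <;> simp <;> field_simp

theorem exp_I_arg_mul_cos_arcsin {z : ℂ} {x : ℝ} (h : ‖z‖ ^ 2 + x ^ 2 = 1) :
    exp (I * arg z) * Real.cos (Real.arcsin x) = z := by
  rw [Real.cos_arcsin, ← h, add_sub_cancel_right, Real.sqrt_sq (norm_nonneg z), mul_comm,
    mul_comm I]
  exact norm_mul_exp_arg_mul_I z

theorem exp_neg_I_arg_mul_cos_arcsin {z : ℂ} {x : ℝ} (h : ‖z‖ ^ 2 + x ^ 2 = 1) :
    exp (-(I * arg z)) * Real.cos (Real.arcsin x) = conj z := by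
  conv_rhs => rw [← exp_I_arg_mul_cos_arcsin h, map_mul, ← exp_conj, map_mul, conj_I,
    conj_ofReal, conj_ofReal, neg_mul]

section WarmStart

variable {q : ℝ} (hq0 : 0 ≤ q) (hq1 : q ≤ 1)
include hq0 hq1

theorem sqrt_mul_one_sub_sq : Real.sqrt (q * (1 - q)) ^ 2 = q * (1 - q) :=
  Real.sq_sqrt (mul_nonneg hq0 (sub_nonneg.2 hq1))

theorem wsMixer_sq : wsMixer q ^ 2 = 1 := by
  have hsq : (Real.sqrt (q * (1 - q)) : ℂ) ^ 2 = q * (1 - q) := by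
    exact_mod_cast sqrt_mul_one_sub_sq hq0 hq1
  rw [sq, wsMixer, mul_fin_two, one_fin_two]
  ext i j
  fin_cases i <;> fin_cases j <;> simp <;> first | ring1 | linear_combination 4 * hsq

theorem exp_wsMixer (β : ℝ) :
    NormedSpace.exp ((-(I * β)) • wsMixer q)
      = !![Real.cos β - I * ((1 - 2 * q) * Real.sin β : ℝ),
            I * (2 * Real.sqrt (q * (1 - q)) * Real.sin β : ℝ);
           I * (2 * Real.sqrt (q * (1 - q)) * Real.sin β : ℝ),
            Real.cos β + I * ((1 - 2 * q) * Real.sin β : ℝ)] := by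
  rw [Matrix.exp_smul_of_sq_eq_one (wsMixer_sq hq0 hq1), show -(I * β) = (-β : ℂ) * I by ring,
    cosh_mul_I, sinh_mul_I, wsMixer, one_fin_two]
  ext i j
  fin_cases i <;> fin_cases j <;> simp <;> ring

theorem wsMixer_entry_norm_sq_add_sq (β : ℝ) :
    ‖(Real.cos β : ℂ) + I * ((1 - 2 * q) * Real.sin β : ℝ)‖ ^ 2
      + (2 * Real.sqrt (q * (1 - q)) * Real.sin β) ^ 2 = 1 := by
  rw [Complex.sq_norm, mul_comm I, normSq_add_mul_I]
  linear_combination Real.cos_sq_add_sin_sq β + 4 * Real.sin β ^ 2 * sqrt_mul_one_sub_sq hq0 hq1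

theorem exp_wsMixer_eq_phases (β φ₁ φ₂ : ℝ)
    (hφ₁ : φ₁ = arg ((Real.cos β : ℂ) + I * ((1 - 2 * q) * Real.sin β : ℝ)))
    (hφ₂ : φ₂ = Real.arcsin (2 * Real.sqrt (q * (1 - q)) * Real.sin β)) :
    NormedSpace.exp ((-(I * β)) • wsMixer q)
      = !![exp (-(I * φ₁)) * Real.cos φ₂, I * Real.sin φ₂;
           I * Real.sin φ₂, exp (I * φ₁) * Real.cos φ₂] := by
  have h := wsMixer_entry_norm_sq_add_sq hq0 hq1 β
  have hsin : Real.sin φ₂ = 2 * Real.sqrt (q * (1 - q)) * Real.sin β := by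
    have hx := abs_le.1 ((sq_le_one_iff_abs_le_one _).1
      ((le_add_of_nonneg_left (sq_nonneg _)).trans_eq h))
    rw [hφ₂, Real.sin_arcsin hx.1 hx.2]
  rw [exp_wsMixer hq0 hq1, hφ₁, hφ₂, exp_neg_I_arg_mul_cos_arcsin h, exp_I_arg_mul_cos_arcsin h,
    ← hφ₂, hsin, map_add, map_mul, conj_ofReal, conj_ofReal, conj_I, neg_mul, ← sub_eq_add_neg]

end WarmStart

/-- With `φ₁ = arctan2((1-2q) sin β, cos β)` (the argument of
`cos β + i(1-2q) sin β`) and `φ₂ = arcsin(2√(q(1-q)) sin β)`, the evolution of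
the warm-start mixer factorizes exactly:
`exp(-iβM(q)) = [[e^{-iφ₁} cos φ₂, i sin φ₂], [i sin φ₂, e^{iφ₁} cos φ₂]]`,
and on two qubits, `exp(-iβ·blockdiag(0, M(q), 0))` is the product of a
Z-rotation by `φ₁` on the first qubit, the XY-interaction
`blockdiag(1, [[cos φ₂, i sin φ₂], [i sin φ₂, cos φ₂]], 1)`, and a Z-rotation
by `-φ₁` on the second qubit. -/
theorem statement11 (q : ℝ) (hq0 : 0 < q) (hq1 : q < 1) (β : ℝ)
    (φ₁ φ₂ : ℝ)
    (hφ₁ : φ₁ = Complex.arg ((Real.cos β : ℂ) + Complex.I * ((1 - 2*q) * Real.sin β : ℝ)))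
    (hφ₂ : φ₂ = Real.arcsin (2 * Real.sqrt (q * (1 - q)) * Real.sin β)) :
    NormedSpace.exp ((-(Complex.I * β)) • wsMixer q)
      = !![Complex.exp (-(Complex.I * φ₁)) * Real.cos φ₂, Complex.I * Real.sin φ₂;
           Complex.I * Real.sin φ₂, Complex.exp (Complex.I * φ₁) * Real.cos φ₂] ∧
    NormedSpace.exp ((-(Complex.I * β)) • blockdiag 0 (wsMixer q) 0)
      = (RZ φ₁ ⊗ₖ (1 : Matrix (Fin 2) (Fin 2) ℂ))
        * blockdiag 1 (!![(Real.cos φ₂ : ℂ), Complex.I * Real.sin φ₂;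
                          Complex.I * Real.sin φ₂, (Real.cos φ₂ : ℂ)]) 1
        * ((1 : Matrix (Fin 2) (Fin 2) ℂ) ⊗ₖ RZ (-φ₁)) := by
  have hexp := exp_wsMixer_eq_phases hq0.le hq1.le β φ₁ φ₂ hφ₁ hφ₂
  have hcube : wsMixer q ^ 3 = wsMixer q := by
    rw [pow_succ, wsMixer_sq hq0.le hq1.le, one_mul]
  have hphase : exp (-(I * φ₁) / 2) * exp (I * φ₁ / 2) = 1 := by
    rw [← exp_add, neg_div, neg_add_cancel, exp_zero]
  refine ⟨hexp, ?_⟩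
  rw [exp_smul_blockdiag_zero hcube, hexp, RZ_kronecker_one, one_kronecker_RZ_neg, blockdiag_mul,
    blockdiag_mul, RZ_mul_mul_RZ, mul_one, mul_one, hphase, mul_comm (exp (I * φ₁ / 2)), hphase]
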